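/- arXiv:2509.11618 — 4 statements merged into one kernel-verified Lean document; each statement's English description precedes it below -/
import Mathlib

section
/- Suppose F(t,·) : ℝ^d → ℝ^d is differentiable with Jacobian F'_x(t,x) for every t ∈ [0,T], the map u ↦ V̂(t,u) is differentiable and satisfies A_t V̂(t,u) + R F(t, u + V̂(t,u)) = 0 for all (t,u) ∈ [0,T] × ℝ^d, and the Jacobian matrix J(t,x) := A_t + R F'_x(t,x) is invertible with |J(t,x)⁻¹| ≤ L_J for all (t,x). Set L̂ := (sup_{t∈[0,T]} |A_t|)·L_J + d. Then |∂_u V̂(t,u)| ≤ L̂ for all (t,u) ∈ [0,T] × ℝ^d, and consequently |V̂(t,u) − V̂(t,v)| ≤ L̂ |u − v| for all t ∈ [0,T] and u, v ∈ ℝ^d. -/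
/-!
Differentiating the implicit equation `A V̂ + R F(u + V̂) = 0` in `u` gives
`A V̂' + R F' (1 + V̂') = 0`, i.e. `J (1 + V̂') = A`, so `V̂' = J⁻¹ A - 1`. Submultiplicativity of the
Frobenius norm and `|1| = √d ≤ d` bound this by `L_J sup |A| + d`. Since the Frobenius norm
dominates the Euclidean operator norm, the mean value inequality turns the Jacobian bound into
the Lipschitz bound.
-/

open Matrix

/-- Euclidean norm of a vector in `ℝ^d`. -/
noncomputable def vnorm {d : ℕ} (x : Fin d → ℝ) : ℝ :=
  Real.sqrt (∑ i, (x i) ^ 2)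

/-- Frobenius norm of a real matrix: `|B| = sqrt (trace (Bᵀ * B))`. -/
noncomputable def mnorm {d m : ℕ} (B : Matrix (Fin d) (Fin m) ℝ) : ℝ :=
  Real.sqrt ((Bᵀ * B).trace)

section FrobeniusNorm

attribute [local instance] Matrix.frobeniusNormedAddCommGroup

lemma trace_transpose_mul_self_eq_sum_sq {m n : ℕ} (B : Matrix (Fin m) (Fin n) ℝ) :
    (Bᵀ * B).trace = ∑ i, ∑ j, B i j ^ 2 := by
  rw [Matrix.trace, Finset.sum_comm]
  simp [Matrix.mul_apply, pow_two]

lemma mnorm_eq_frobenius_norm {m n : ℕ} (B : Matrix (Fin m) (Fin n) ℝ) : mnorm B = ‖B‖ := by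
  simp [mnorm, Matrix.frobenius_norm_def, Real.sqrt_eq_rpow, trace_transpose_mul_self_eq_sum_sq]

lemma vnorm_eq_norm_toLp {n : ℕ} (x : Fin n → ℝ) : vnorm x = ‖WithLp.toLp 2 x‖ := by
  simp [vnorm, EuclideanSpace.norm_eq]

lemma mnorm_nonneg {m n : ℕ} (B : Matrix (Fin m) (Fin n) ℝ) : 0 ≤ mnorm B :=
  Real.sqrt_nonneg _

lemma vnorm_mulVec_le {m n : ℕ} (B : Matrix (Fin m) (Fin n) ℝ) (x : Fin n → ℝ) :
    vnorm (B *ᵥ x) ≤ mnorm B * vnorm x := by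
  simp only [vnorm_eq_norm_toLp, mnorm_eq_frobenius_norm,
    ← Matrix.frobenius_norm_replicateCol (ι := Unit), Matrix.replicateCol_mulVec]
  exact Matrix.frobenius_norm_mul _ _

lemma mnorm_one_le (n : ℕ) : mnorm (1 : Matrix (Fin n) (Fin n) ℝ) ≤ n := by
  have : mnorm (1 : Matrix (Fin n) (Fin n) ℝ) = √n := by simp [mnorm]
  rw [this, Real.sqrt_le_self_iff]
  rcases n with _ | n <;> simp

lemma mnorm_mul_sub_one_le {n : ℕ} (P Q : Matrix (Fin n) (Fin n) ℝ) :
    mnorm (P * Q - 1) ≤ mnorm P * mnorm Q + n := by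
  calc mnorm (P * Q - 1) ≤ mnorm (P * Q) + mnorm (1 : Matrix (Fin n) (Fin n) ℝ) := by
        simpa only [mnorm_eq_frobenius_norm] using norm_sub_le (P * Q) 1
    _ ≤ mnorm P * mnorm Q + n := by
        gcongr
        · simpa only [mnorm_eq_frobenius_norm] using Matrix.frobenius_norm_mul P Q
        · exact mnorm_one_le n

end FrobeniusNorm

lemma hasFDerivAt_mulVec_add_mulVec_comp_add_self {n : ℕ} (A R : Matrix (Fin n) (Fin n) ℝ)
    {F V : (Fin n → ℝ) → Fin n → ℝ} {F' V' : Matrix (Fin n) (Fin n) ℝ} {u : Fin n → ℝ}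
    (hV : HasFDerivAt V V'.mulVecLin.toContinuousLinearMap u)
    (hF : HasFDerivAt F F'.mulVecLin.toContinuousLinearMap (u + V u)) :
    HasFDerivAt (fun w => A *ᵥ V w + R *ᵥ F (w + V w))
      (A * V' + R * F' * (1 + V')).mulVecLin.toContinuousLinearMap u := by
  have h := (A.mulVecLin.toContinuousLinearMap.hasFDerivAt.comp u hV).add
    (R.mulVecLin.toContinuousLinearMap.hasFDerivAt.comp u (hF.comp u ((hasFDerivAt_id u).add hV)))
  have hJac : (A * V' + R * F' * (1 + V')).mulVecLin.toContinuousLinearMap =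
      A.mulVecLin.toContinuousLinearMap.comp V'.mulVecLin.toContinuousLinearMap +
        R.mulVecLin.toContinuousLinearMap.comp (F'.mulVecLin.toContinuousLinearMap.comp
          (ContinuousLinearMap.id ℝ _ + V'.mulVecLin.toContinuousLinearMap)) := by
    ext1 w
    simp [Matrix.mulVec_add, Matrix.mulVec_mulVec, mul_assoc]
  rw [hJac]
  exact h

lemma eq_zero_of_hasFDerivAt_mulVecLin_of_forall_eq_zero {m n : ℕ} {f : (Fin n → ℝ) → Fin m → ℝ}
    {M : Matrix (Fin m) (Fin n) ℝ} {u : Fin n → ℝ}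
    (hf : HasFDerivAt f M.mulVecLin.toContinuousLinearMap u) (h0 : ∀ w, f w = 0) : M = 0 := by
  have hconst : HasFDerivAt f (0 : (Fin n → ℝ) →L[ℝ] Fin m → ℝ) u := by
    simpa [funext h0] using hasFDerivAt_const (𝕜 := ℝ) (0 : Fin m → ℝ) u
  have := hf.unique hconst
  apply Matrix.toLin'.injective
  simpa [Matrix.toLin'_apply'] using this

lemma eq_nonsing_inv_mul_sub_one {ι α : Type*} [Fintype ι] [DecidableEq ι] [CommRing α]
    {A B X : Matrix ι ι α} (hAB : IsUnit (A + B)) (h : A * X + B * (1 + X) = 0) :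
    X = (A + B)⁻¹ * A - 1 := by
  have hJX : (A + B) * (1 + X) = A := by
    rw [← sub_eq_zero, ← h]; noncomm_ring
  calc X = (A + B)⁻¹ * ((A + B) * (1 + X)) - 1 := by
        rw [Matrix.nonsing_inv_mul_cancel_left _ _ ((Matrix.isUnit_iff_isUnit_det _).mp hAB)]
        abel
    _ = (A + B)⁻¹ * A - 1 := by rw [hJX]

lemma vnorm_image_sub_le_of_mnorm_hasFDerivAt_le {m n : ℕ} {f : (Fin n → ℝ) → Fin m → ℝ}
    {f' : (Fin n → ℝ) → Matrix (Fin m) (Fin n) ℝ} {C : ℝ}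
    (hf : ∀ u, HasFDerivAt f (f' u).mulVecLin.toContinuousLinearMap u)
    (hC : ∀ u, mnorm (f' u) ≤ C) (u v : Fin n → ℝ) :
    vnorm (f u - f v) ≤ C * vnorm (u - v) := by
  let Eₙ := PiLp.continuousLinearEquiv 2 ℝ (fun _ : Fin n => ℝ)
  let Eₘ := PiLp.continuousLinearEquiv 2 ℝ (fun _ : Fin m => ℝ)
  let g : EuclideanSpace ℝ (Fin n) → EuclideanSpace ℝ (Fin m) := fun y => Eₘ.symm (f (Eₙ y))
  let g' : EuclideanSpace ℝ (Fin n) → EuclideanSpace ℝ (Fin n) →L[ℝ] EuclideanSpace ℝ (Fin m) :=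
    fun y => (Eₘ.symm : (Fin m → ℝ) →L[ℝ] _).comp
      ((f' (Eₙ y)).mulVecLin.toContinuousLinearMap.comp (Eₙ : _ →L[ℝ] Fin n → ℝ))
  have hg : ∀ y, HasFDerivAt g (g' y) y :=
    fun y => Eₘ.symm.hasFDerivAt.comp y ((hf _).comp y Eₙ.hasFDerivAt)
  have hg' : ∀ y, ‖g' y‖ ≤ C := fun y =>
    ContinuousLinearMap.opNorm_le_bound _ ((mnorm_nonneg _).trans (hC u)) fun z => by
      simpa [g', Eₙ, Eₘ, PiLp.coe_continuousLinearEquiv, PiLp.coe_symm_continuousLinearEquiv,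
        vnorm_eq_norm_toLp] using (vnorm_mulVec_le (f' (Eₙ y)) (Eₙ z)).trans
          (mul_le_mul_of_nonneg_right (hC _) (Real.sqrt_nonneg _))
  have hmvt := convex_univ.norm_image_sub_le_of_norm_hasFDerivWithin_le
    (fun y _ => (hg y).hasFDerivWithinAt) (fun y _ => hg' y)
    (Set.mem_univ (Eₙ.symm v)) (Set.mem_univ (Eₙ.symm u))
  simpa [g, Eₙ, Eₘ, PiLp.coe_continuousLinearEquiv, PiLp.coe_symm_continuousLinearEquiv,
    vnorm_eq_norm_toLp] using hmvt

theorem stmt2_general (T : ℝ) (d : ℕ)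
    (A Am : ℝ → Matrix (Fin d) (Fin d) ℝ)
    -- `sup_{t ∈ [0,T]} |A_t| < ∞`
    (hAbdd : BddAbove ((fun t => mnorm (A t)) '' Set.Icc (0:ℝ) T))
    (F : ℝ → (Fin d → ℝ) → Fin d → ℝ)
    (F' : ℝ → (Fin d → ℝ) → Matrix (Fin d) (Fin d) ℝ)
    -- `F(t,·)` is differentiable with Jacobian `F' t x`
    (hF : ∀ t ∈ Set.Icc (0:ℝ) T, ∀ x : Fin d → ℝ,
      HasFDerivAt (F t) (LinearMap.toContinuousLinearMap (F' t x).mulVecLin) x)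
    (V : ℝ → (Fin d → ℝ) → Fin d → ℝ)
    (V' : ℝ → (Fin d → ℝ) → Matrix (Fin d) (Fin d) ℝ)
    -- `u ↦ V̂(t,u)` is differentiable with Jacobian `V' t u`
    (hV : ∀ t ∈ Set.Icc (0:ℝ) T, ∀ u : Fin d → ℝ,
      HasFDerivAt (V t) (LinearMap.toContinuousLinearMap (V' t u).mulVecLin) u)
    -- `A_t V̂(t,u) + R F(t, u + V̂(t,u)) = 0` with `R = I - A_t A_t⁻`
    (hveq : ∀ t ∈ Set.Icc (0:ℝ) T, ∀ u : Fin d → ℝ,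
      (A t).mulVec (V t u) + (1 - A t * Am t).mulVec (F t (u + V t u)) = 0)
    (LJ : ℝ)
    -- the Jacobian `J(t,x) = A_t + R F'_x(t,x)` is invertible with `|J⁻¹| ≤ L_J`
    (hJ : ∀ t ∈ Set.Icc (0:ℝ) T, ∀ x : Fin d → ℝ,
      IsUnit (A t + (1 - A t * Am t) * F' t x) ∧
      mnorm ((A t + (1 - A t * Am t) * F' t x)⁻¹) ≤ LJ)
    (Lhat : ℝ)
    -- `L̂ = (sup_{t ∈ [0,T]} |A_t|) L_J + d`
    (hLhat : Lhat = sSup ((fun t => mnorm (A t)) '' Set.Icc (0:ℝ) T) * LJ + d) :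
    ∀ t ∈ Set.Icc (0:ℝ) T,
      (∀ u : Fin d → ℝ, mnorm (V' t u) ≤ Lhat) ∧
      (∀ u v : Fin d → ℝ, vnorm (V t u - V t v) ≤ Lhat * vnorm (u - v)) := by
  intro t ht
  have hV'_le : ∀ u, mnorm (V' t u) ≤ Lhat := by
    intro u
    obtain ⟨hJ_unit, hJ_inv⟩ := hJ t ht (u + V t u)
    have hJac_eq := eq_zero_of_hasFDerivAt_mulVecLin_of_forall_eq_zero
      (hasFDerivAt_mulVec_add_mulVec_comp_add_self (A t) (1 - A t * Am t)
        (hV t ht u) (hF t ht _)) (hveq t ht)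
    rw [eq_nonsing_inv_mul_sub_one hJ_unit hJac_eq]
    calc _ ≤ _ * mnorm (A t) + d := mnorm_mul_sub_one_le _ _
      _ ≤ LJ * sSup ((fun t => mnorm (A t)) '' Set.Icc (0:ℝ) T) + d :=
          add_le_add_left (mul_le_mul hJ_inv (le_csSup hAbdd ⟨t, ht, rfl⟩) (mnorm_nonneg _)
            ((mnorm_nonneg _).trans hJ_inv)) _
      _ = Lhat := by rw [hLhat, mul_comm]
  exact ⟨hV'_le, vnorm_image_sub_le_of_mnorm_hasFDerivAt_le (hV t ht) hV'_le⟩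

theorem stmt2 (T : ℝ) (hT : 0 < T) (d : ℕ) (hd : 1 ≤ d)
    (A Am : ℝ → Matrix (Fin d) (Fin d) ℝ)
    -- `Am t` is the Moore–Penrose pseudoinverse of `A t`
    (hPI : ∀ t ∈ Set.Icc (0:ℝ) T, A t * Am t * A t = A t ∧ Am t * A t * Am t = Am t ∧
      (A t * Am t)ᵀ = A t * Am t ∧ (Am t * A t)ᵀ = Am t * A t)
    -- `sup_{t ∈ [0,T]} |A_t| < ∞`
    (hAbdd : BddAbove ((fun t => mnorm (A t)) '' Set.Icc (0:ℝ) T))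
    (F : ℝ → (Fin d → ℝ) → Fin d → ℝ)
    (F' : ℝ → (Fin d → ℝ) → Matrix (Fin d) (Fin d) ℝ)
    -- `F(t,·)` is differentiable with Jacobian `F' t x`
    (hF : ∀ t ∈ Set.Icc (0:ℝ) T, ∀ x : Fin d → ℝ,
      HasFDerivAt (F t) (LinearMap.toContinuousLinearMap (F' t x).mulVecLin) x)
    (V : ℝ → (Fin d → ℝ) → Fin d → ℝ)
    (V' : ℝ → (Fin d → ℝ) → Matrix (Fin d) (Fin d) ℝ)
    -- `u ↦ V̂(t,u)` is differentiable with Jacobian `V' t u`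
    (hV : ∀ t ∈ Set.Icc (0:ℝ) T, ∀ u : Fin d → ℝ,
      HasFDerivAt (V t) (LinearMap.toContinuousLinearMap (V' t u).mulVecLin) u)
    -- `A_t V̂(t,u) + R F(t, u + V̂(t,u)) = 0` with `R = I - A_t A_t⁻`
    (hveq : ∀ t ∈ Set.Icc (0:ℝ) T, ∀ u : Fin d → ℝ,
      (A t).mulVec (V t u) + (1 - A t * Am t).mulVec (F t (u + V t u)) = 0)
    (LJ : ℝ) (hLJ : 0 < LJ)
    -- the Jacobian `J(t,x) = A_t + R F'_x(t,x)` is invertible with `|J⁻¹| ≤ L_J`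
    (hJ : ∀ t ∈ Set.Icc (0:ℝ) T, ∀ x : Fin d → ℝ,
      IsUnit (A t + (1 - A t * Am t) * F' t x) ∧
      mnorm ((A t + (1 - A t * Am t) * F' t x)⁻¹) ≤ LJ)
    (Lhat : ℝ)
    -- `L̂ = (sup_{t ∈ [0,T]} |A_t|) L_J + d`
    (hLhat : Lhat = sSup ((fun t => mnorm (A t)) '' Set.Icc (0:ℝ) T) * LJ + d) :
    ∀ t ∈ Set.Icc (0:ℝ) T,
      (∀ u : Fin d → ℝ, mnorm (V' t u) ≤ Lhat) ∧
      (∀ u v : Fin d → ℝ, vnorm (V t u - V t v) ≤ Lhat * vnorm (u - v)) :=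
  stmt2_general T d A Am hAbdd F F' hF V V' hV hveq LJ hJ Lhat hLhat
end

section
/- Suppose that for every (t,x) ∈ [0,T] × ℝ^d the equation A_t v + R F(t, x + v) = 0 has exactly one solution v ∈ ℝ^d, denoted V̂(t,x). Then V̂(t, Px) = Qx + V̂(t,x) for all (t,x) ∈ [0,T] × ℝ^d; equivalently, x = Px + Qx and the algebraic component satisfies Qx + V̂(t,x) = V̂(t,Px). -/
/-! The equation sees `x` only through `x + v`, and `v` otherwise only through `A_t v`.
Since `A_t P = A_t`, replacing `x` by `Px` and `v` by `Qx + v` leaves both `x + v` and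
`A_t v` unchanged, so `Qx + V̂(t, x)` solves the equation at `Px`. -/

open Matrix

section UniqueSolution

variable {R n : Type*} [Ring R] [Fintype n] [DecidableEq n]

theorem Matrix.mulVec_one_sub_mulVec_eq_zero {A P : Matrix n n R} (hAP : A * P = A)
    (x : n → R) : A *ᵥ ((1 - P) *ᵥ x) = 0 := by
  rw [mulVec_mulVec, mul_sub, mul_one, hAP, sub_self, zero_mulVec]

theorem Matrix.unique_solution_mulVec_eq_add {A P : Matrix n n R} (hAP : A * P = A)
    {G V : (n → R) → n → R} (hV : ∀ x v, A *ᵥ v + G (x + v) = 0 ↔ v = V x)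
    (x : n → R) : V (P *ᵥ x) = (1 - P) *ᵥ x + V x := by
  have hsplit : P *ᵥ x + ((1 - P) *ᵥ x + V x) = x + V x := by
    rw [sub_mulVec, one_mulVec]; abel
  refine ((hV _ _).mp ?_).symm
  rw [hsplit, mulVec_add, mulVec_one_sub_mulVec_eq_zero hAP, zero_add]
  exact (hV x (V x)).mpr rfl

end UniqueSolution

theorem stmt6_general (T : ℝ) (d : ℕ)
    (A Am : ℝ → Matrix (Fin d) (Fin d) ℝ) (P : Matrix (Fin d) (Fin d) ℝ)
    -- `Am t` is the Moore–Penrose pseudoinverse of `A t`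
    (hPI : ∀ t ∈ Set.Icc (0:ℝ) T, A t * Am t * A t = A t ∧ Am t * A t * Am t = Am t ∧
      (A t * Am t)ᵀ = A t * Am t ∧ (Am t * A t)ᵀ = Am t * A t)
    -- `P = A_t⁻ A_t` is independent of `t`
    (hP : ∀ t ∈ Set.Icc (0:ℝ) T, Am t * A t = P)
    (F : ℝ → (Fin d → ℝ) → Fin d → ℝ)
    (V : ℝ → (Fin d → ℝ) → Fin d → ℝ)
    -- for every `(t,x)`, `v = V̂(t,x)` is the unique solution of
    -- `A_t v + R F(t, x + v) = 0` where `R = I − A_t A_t⁻`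
    (hV : ∀ t ∈ Set.Icc (0:ℝ) T, ∀ x v : Fin d → ℝ,
      ((A t).mulVec v + (1 - A t * Am t).mulVec (F t (x + v)) = 0 ↔ v = V t x)) :
    ∀ t ∈ Set.Icc (0:ℝ) T, ∀ x : Fin d → ℝ,
      V t (P.mulVec x) = (1 - P).mulVec x + V t x := by
  intro t ht
  have hAP : A t * P = A t := by rw [← hP t ht, ← mul_assoc, (hPI t ht).1]
  exact unique_solution_mulVec_eq_add (G := fun y => (1 - A t * Am t) *ᵥ F t y) hAP (hV t ht)

theorem stmt6 (T : ℝ) (hT : 0 < T) (d : ℕ) (hd : 1 ≤ d)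
    (A Am : ℝ → Matrix (Fin d) (Fin d) ℝ) (P : Matrix (Fin d) (Fin d) ℝ)
    -- `Am t` is the Moore–Penrose pseudoinverse of `A t`
    (hPI : ∀ t ∈ Set.Icc (0:ℝ) T, A t * Am t * A t = A t ∧ Am t * A t * Am t = Am t ∧
      (A t * Am t)ᵀ = A t * Am t ∧ (Am t * A t)ᵀ = Am t * A t)
    -- `P = A_t⁻ A_t` is independent of `t`
    (hP : ∀ t ∈ Set.Icc (0:ℝ) T, Am t * A t = P)
    (F : ℝ → (Fin d → ℝ) → Fin d → ℝ)
    (V : ℝ → (Fin d → ℝ) → Fin d → ℝ)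
    -- for every `(t,x)`, `v = V̂(t,x)` is the unique solution of
    -- `A_t v + R F(t, x + v) = 0` where `R = I − A_t A_t⁻`
    (hV : ∀ t ∈ Set.Icc (0:ℝ) T, ∀ x v : Fin d → ℝ,
      ((A t).mulVec v + (1 - A t * Am t).mulVec (F t (x + v)) = 0 ↔ v = V t x)) :
    ∀ t ∈ Set.Icc (0:ℝ) T, ∀ x : Fin d → ℝ,
      V t (P.mulVec x) = (1 - P).mulVec x + V t x :=
  stmt6_general T d A Am P hPI hP F V hV
end

section
/- Let d ≥ 1 and for each t ∈ [0,T] let A_t := M diag(σ₁(t), 0, …, 0) N with M, N ∈ ℝ^{d×d} orthogonal and 0 < σ₁(t) ≤ σ̄, and let A_t⁻ := Nᵀ diag(σ₁(t)⁻¹, 0, …, 0) Mᵀ and P := A_t⁻ A_t. Suppose (I − A_t A_t⁻) G(t,x) = 0 for all (t,x), and suppose that for constants L₁ > 0 and p₁ > 1: 2⟨Px − Py, A_t⁻ F(t,x) − A_t⁻ F(t,y)⟩ + (p₁ − 1)|A_t⁻ G(t,x) − A_t⁻ G(t,y)|² ≤ L₁ |x − y|² for all x, y ∈ ℝ^d and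 t ∈ [0,T]. Then for all x, y ∈ ℝ^d and t ∈ [0,T]: 2⟨A_t x − A_t y, F(t,x) − F(t,y)⟩ + (p₁ − 1)|G(t,x) − G(t,y)|² ≤ σ̄² L₁ |x − y|². -/
/-!
With `s = σ₁(t)` and `Q = M diag(1,0,…,0) N` we have `A = s Q` and `A⁻ = s⁻¹ Qᵀ`, where `Q` is a
partial isometry (`Q Qᵀ Q = Q`), so `P = QᵀQ` is an orthogonal projection. Hence
`⟨A u, v⟩ = s² ⟨P u, A⁻ v⟩`, and, since the range condition gives `H = A (A⁻ H)` for
`H = G(t,x) − G(t,y)`, also `|H|² ≤ s² |A⁻ H|²`. So the left-hand side is at most `s²` times that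
of the hypothesis, and `s² ≤ σ̄²`.
-/

open Matrix

/-- Euclidean inner product on `ℝ^d`. -/
def vdot {d : ℕ} (x y : Fin d → ℝ) : ℝ := ∑ i, x i * y i

namespace Matrix

variable {m n k : Type*} [Fintype m] [Fintype n] [Fintype k]

lemma trace_transpose_mul_self_nonneg (B : Matrix m n ℝ) : 0 ≤ (Bᵀ * B).trace := by
  simpa [conjTranspose_eq_transpose_of_trivial] using
    (posSemidef_conjTranspose_mul_self B).trace_nonneg

lemma mulVec_dotProduct (B : Matrix m n ℝ) (u : n → ℝ) (v : m → ℝ) :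
    (B *ᵥ u) ⬝ᵥ v = u ⬝ᵥ (Bᵀ *ᵥ v) := by
  rw [dotProduct_comm, dotProduct_mulVec, mulVec_transpose, dotProduct_comm]

lemma trace_transpose_mul_mul_le {P : Matrix n n ℝ} (hPt : Pᵀ = P) (hPP : IsIdempotentElem P)
    (K : Matrix n k ℝ) : (Kᵀ * P * K).trace ≤ (Kᵀ * K).trace := by
  classical
  have hcompl : (1 - P) * (1 - P) = 1 - P := by
    rw [mul_sub, sub_mul, sub_mul, hPP, mul_one, one_mul, mul_one]; abel
  have hsplit : ((1 - P) * K)ᵀ * ((1 - P) * K) = Kᵀ * K - Kᵀ * P * K := by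
    rw [transpose_mul, transpose_sub, transpose_one, hPt, Matrix.mul_assoc,
      ← Matrix.mul_assoc (1 - P), hcompl, Matrix.sub_mul, Matrix.mul_sub, Matrix.one_mul,
      Matrix.mul_assoc]
  have hnonneg := trace_transpose_mul_self_nonneg ((1 - P) * K)
  rw [hsplit, trace_sub] at hnonneg
  linarith

end Matrix

lemma Matrix.sub_eq_mul_mul_sub_of_mul_eq_zero {m n k R : Type*} [Fintype m] [Fintype n]
    [DecidableEq m] [Ring R] {A : Matrix m n R} {B : Matrix n m R} {X Y : Matrix m k R}
    (hX : (1 - A * B) * X = 0) (hY : (1 - A * B) * Y = 0) : X - Y = A * (B * (X - Y)) := by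
  rw [Matrix.sub_mul, Matrix.one_mul, sub_eq_zero] at hX hY
  rw [← Matrix.mul_assoc, Matrix.mul_sub, ← hX, ← hY]

def Matrix.IsPartialIsometry {m n : Type*} [Fintype m] [Fintype n] (Q : Matrix m n ℝ) : Prop :=
  Q * Qᵀ * Q = Q

namespace Matrix.IsPartialIsometry

variable {l m n k : Type*} [Fintype l] [Fintype m] [Fintype n] [Fintype k] {Q : Matrix m n ℝ}

lemma transpose_mul_mul_transpose (hQ : IsPartialIsometry Q) : Qᵀ * Q * Qᵀ = Qᵀ := by
  simpa [IsPartialIsometry, Matrix.mul_assoc] using congrArg transpose hQ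

lemma isIdempotentElem_transpose_mul_self (hQ : IsPartialIsometry Q) :
    IsIdempotentElem (Qᵀ * Q) := by
  rw [IsIdempotentElem, ← Matrix.mul_assoc, hQ.transpose_mul_mul_transpose]

lemma trace_mul_le (hQ : IsPartialIsometry Q) (K : Matrix n k ℝ) :
    ((Q * K)ᵀ * (Q * K)).trace ≤ (Kᵀ * K).trace := by
  have hconj : (Q * K)ᵀ * (Q * K) = Kᵀ * (Qᵀ * Q) * K := by
    rw [transpose_mul]; simp only [Matrix.mul_assoc]
  rw [hconj]
  exact trace_transpose_mul_mul_le (by rw [transpose_mul, transpose_transpose])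
    hQ.isIdempotentElem_transpose_mul_self K

lemma orthogonal_mul_mul [DecidableEq m] [DecidableEq n] {E : Matrix m n ℝ}
    (hE : IsPartialIsometry E) {M : Matrix l m ℝ} {N : Matrix n k ℝ} (hM : Mᵀ * M = 1)
    (hN : N * Nᵀ = 1) : IsPartialIsometry (M * E * N) :=
  calc M * E * N * (M * E * N)ᵀ * (M * E * N)
      = M * (E * (N * Nᵀ) * Eᵀ * (Mᵀ * M) * E) * N := by
        simp only [transpose_mul, Matrix.mul_assoc]
    _ = M * E * N := by
        rw [hN, hM, Matrix.mul_one, Matrix.mul_one, hE, Matrix.mul_assoc]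

variable {s : ℝ} {A : Matrix m n ℝ}

lemma trace_smul_mul_le (hQ : IsPartialIsometry Q) (hA : A = s • Q) (K : Matrix n k ℝ) :
    ((A * K)ᵀ * (A * K)).trace ≤ s ^ 2 * (Kᵀ * K).trace := by
  have hscale : (A * K)ᵀ * (A * K) = s ^ 2 • ((Q * K)ᵀ * (Q * K)) := by
    rw [hA, Matrix.smul_mul, transpose_smul, Matrix.smul_mul, Matrix.mul_smul, smul_smul, sq]
  rw [hscale, trace_smul, smul_eq_mul]
  exact mul_le_mul_of_nonneg_left (hQ.trace_mul_le K) (sq_nonneg s)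

lemma mulVec_dotProduct_eq {Am : Matrix n m ℝ} (hQ : IsPartialIsometry Q) (hs : s ≠ 0)
    (hA : A = s • Q) (hAm : Am = s⁻¹ • Qᵀ) (u : n → ℝ) (v : m → ℝ) :
    (A *ᵥ u) ⬝ᵥ v = s ^ 2 * (((Am * A) *ᵥ u) ⬝ᵥ (Am *ᵥ v)) := by
  have hP : Am * A = Qᵀ * Q := by
    rw [hA, hAm, Matrix.smul_mul, Matrix.mul_smul, smul_smul, inv_mul_cancel₀ hs, one_smul]
  have hPAm : (Qᵀ * Q)ᵀ * Am = s⁻¹ • Qᵀ := by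
    rw [transpose_mul, transpose_transpose, hAm, Matrix.mul_smul,
      hQ.transpose_mul_mul_transpose]
  rw [hP, mulVec_dotProduct A, mulVec_dotProduct (Qᵀ * Q), mulVec_mulVec, hPAm, hA,
    transpose_smul, smul_mulVec, smul_mulVec, dotProduct_smul, dotProduct_smul, smul_eq_mul,
    smul_eq_mul]
  field_simp

end Matrix.IsPartialIsometry

lemma Matrix.isPartialIsometry_diagonal_ite {n : Type*} [Fintype n] [DecidableEq n]
    (p : n → Prop) [DecidablePred p] :
    IsPartialIsometry (diagonal fun i => if p i then (1 : ℝ) else 0) := by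
  unfold IsPartialIsometry
  rw [diagonal_transpose, diagonal_mul_diagonal, diagonal_mul_diagonal]
  congr 1; ext i; by_cases h : p i <;> simp [h]

lemma Matrix.diagonal_ite_eq_smul {n : Type*} [DecidableEq n] (p : n → Prop) [DecidablePred p]
    (c : ℝ) :
    diagonal (fun i => if p i then c else 0) = c • diagonal fun i => if p i then 1 else 0 := by
  rw [← diagonal_smul]; congr 1; ext i; by_cases h : p i <;> simp [h]

lemma vdot_eq_dotProduct {d : ℕ} (x y : Fin d → ℝ) : vdot x y = x ⬝ᵥ y := rfl

lemma mnorm_sq {d m : ℕ} (B : Matrix (Fin d) (Fin m) ℝ) : mnorm B ^ 2 = (Bᵀ * B).trace :=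
  Real.sq_sqrt (trace_transpose_mul_self_nonneg B)

theorem stmt11_general (T : ℝ) (d m : ℕ)
    (σbar : ℝ)
    (M N : Matrix (Fin d) (Fin d) ℝ)
    (hM : Mᵀ * M = 1 ∧ M * Mᵀ = 1) (hN : Nᵀ * N = 1 ∧ N * Nᵀ = 1)
    (σ1 : ℝ → ℝ) (hσ1 : ∀ t ∈ Set.Icc (0:ℝ) T, 0 < σ1 t ∧ σ1 t ≤ σbar)
    (A Am : ℝ → Matrix (Fin d) (Fin d) ℝ)
    (hA : ∀ t, A t = M * Matrix.diagonal (fun i : Fin d => if (i:ℕ) = 0 then σ1 t else 0) * N)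
    (hAm : ∀ t, Am t =
      Nᵀ * Matrix.diagonal (fun i : Fin d => if (i:ℕ) = 0 then (σ1 t)⁻¹ else 0) * Mᵀ)
    (F : ℝ → (Fin d → ℝ) → Fin d → ℝ)
    (G : ℝ → (Fin d → ℝ) → Matrix (Fin d) (Fin m) ℝ)
    -- `(I − A_t A_t⁻) G(t,x) = 0`
    (hRG : ∀ t ∈ Set.Icc (0:ℝ) T, ∀ x : Fin d → ℝ, (1 - A t * Am t) * G t x = 0)
    (L1 p1 : ℝ) (hL1 : 0 < L1) (hp1 : 1 < p1)
    -- coupled monotonicity, with `P = A_t⁻ A_t`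
    (hmono : ∀ t ∈ Set.Icc (0:ℝ) T, ∀ x y : Fin d → ℝ,
      2 * vdot ((Am t * A t).mulVec x - (Am t * A t).mulVec y)
          ((Am t).mulVec (F t x) - (Am t).mulVec (F t y)) +
        (p1 - 1) * mnorm (Am t * G t x - Am t * G t y) ^ 2 ≤
        L1 * vnorm (x - y) ^ 2) :
    ∀ t ∈ Set.Icc (0:ℝ) T, ∀ x y : Fin d → ℝ,
      2 * vdot ((A t).mulVec x - (A t).mulVec y) (F t x - F t y) +
        (p1 - 1) * mnorm (G t x - G t y) ^ 2 ≤
        σbar ^ 2 * L1 * vnorm (x - y) ^ 2 := by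
  intro t ht x y
  obtain ⟨hs, hsσ⟩ := hσ1 t ht
  set E : Matrix (Fin d) (Fin d) ℝ := diagonal fun i => if (i : ℕ) = 0 then 1 else 0
  have hQ : IsPartialIsometry (M * E * N) :=
    IsPartialIsometry.orthogonal_mul_mul (isPartialIsometry_diagonal_ite _) hM.1 hN.2
  have hAt : A t = σ1 t • (M * E * N) := by
    rw [hA, diagonal_ite_eq_smul, Matrix.mul_smul, Matrix.smul_mul]
  have hAmt : Am t = (σ1 t)⁻¹ • (M * E * N)ᵀ := by
    rw [hAm, diagonal_ite_eq_smul, Matrix.mul_smul, Matrix.smul_mul, transpose_mul,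
      transpose_mul, diagonal_transpose, Matrix.mul_assoc]
  have hG := sub_eq_mul_mul_sub_of_mul_eq_zero (hRG t ht x) (hRG t ht y)
  have hGnorm : mnorm (G t x - G t y) ^ 2 ≤ σ1 t ^ 2 * mnorm (Am t * (G t x - G t y)) ^ 2 := by
    rw [mnorm_sq, mnorm_sq]
    simpa only [← hG] using hQ.trace_smul_mul_le hAt (Am t * (G t x - G t y))
  have hdot := hQ.mulVec_dotProduct_eq hs.ne' hAt hAmt (x - y) (F t x - F t y)
  have hmono_t := hmono t ht x y
  rw [← mulVec_sub, ← mulVec_sub, ← Matrix.mul_sub, vdot_eq_dotProduct] at hmono_t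
  rw [← mulVec_sub, vdot_eq_dotProduct, hdot]
  calc 2 * (σ1 t ^ 2 * ((Am t * A t) *ᵥ (x - y)) ⬝ᵥ (Am t *ᵥ (F t x - F t y)))
        + (p1 - 1) * mnorm (G t x - G t y) ^ 2
      ≤ σ1 t ^ 2 * (2 * ((Am t * A t) *ᵥ (x - y)) ⬝ᵥ (Am t *ᵥ (F t x - F t y))
        + (p1 - 1) * mnorm (Am t * (G t x - G t y)) ^ 2) := by
        linarith [mul_le_mul_of_nonneg_left hGnorm (sub_nonneg.mpr hp1.le)]
    _ ≤ σ1 t ^ 2 * (L1 * vnorm (x - y) ^ 2) := by gcongr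
    _ ≤ σbar ^ 2 * L1 * vnorm (x - y) ^ 2 := by
        rw [← mul_assoc]; gcongr

theorem stmt11 (T : ℝ) (hT : 0 < T) (d m : ℕ) (hd : 1 ≤ d) (hm : 1 ≤ m)
    (σbar : ℝ) (hσbar : 0 < σbar)
    (M N : Matrix (Fin d) (Fin d) ℝ)
    (hM : Mᵀ * M = 1 ∧ M * Mᵀ = 1) (hN : Nᵀ * N = 1 ∧ N * Nᵀ = 1)
    (σ1 : ℝ → ℝ) (hσ1 : ∀ t ∈ Set.Icc (0:ℝ) T, 0 < σ1 t ∧ σ1 t ≤ σbar)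
    (A Am : ℝ → Matrix (Fin d) (Fin d) ℝ)
    (hA : ∀ t, A t = M * Matrix.diagonal (fun i : Fin d => if (i:ℕ) = 0 then σ1 t else 0) * N)
    (hAm : ∀ t, Am t =
      Nᵀ * Matrix.diagonal (fun i : Fin d => if (i:ℕ) = 0 then (σ1 t)⁻¹ else 0) * Mᵀ)
    (F : ℝ → (Fin d → ℝ) → Fin d → ℝ)
    (G : ℝ → (Fin d → ℝ) → Matrix (Fin d) (Fin m) ℝ)
    -- `(I − A_t A_t⁻) G(t,x) = 0`
    (hRG : ∀ t ∈ Set.Icc (0:ℝ) T, ∀ x : Fin d → ℝ, (1 - A t * Am t) * G t x = 0)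
    (L1 p1 : ℝ) (hL1 : 0 < L1) (hp1 : 1 < p1)
    -- coupled monotonicity, with `P = A_t⁻ A_t`
    (hmono : ∀ t ∈ Set.Icc (0:ℝ) T, ∀ x y : Fin d → ℝ,
      2 * vdot ((Am t * A t).mulVec x - (Am t * A t).mulVec y)
          ((Am t).mulVec (F t x) - (Am t).mulVec (F t y)) +
        (p1 - 1) * mnorm (Am t * G t x - Am t * G t y) ^ 2 ≤
        L1 * vnorm (x - y) ^ 2) :
    ∀ t ∈ Set.Icc (0:ℝ) T, ∀ x y : Fin d → ℝ,
      2 * vdot ((A t).mulVec x - (A t).mulVec y) (F t x - F t y) +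
        (p1 - 1) * mnorm (G t x - G t y) ^ 2 ≤
        σbar ^ 2 * L1 * vnorm (x - y) ^ 2 :=
  stmt11_general T d m σbar M N hM hN σ1 hσ1 A Am hA hAm F G hRG L1 p1 hL1 hp1 hmono
end

section
/- For t ∈ ℝ let A_t⁻ := diag(2(t²+1), 1/10, 0) ∈ ℝ^{3×3}, P := diag(1, 1, 0), and for x = (x₁, x₂, x₃)ᵀ ∈ ℝ³ let F(t,x) := (−x₁³, x₃, t x₂ + x₃)ᵀ and G(t,x) := diag(sin t, c x₁², 0). If c ∈ ℝ and p₁ > 1 satisfy (p₁ − 1) c² ≤ 300, then for all t ∈ ℝ and x, y ∈ ℝ³: 2⟨Px − Py, A_t⁻ F(t,x) − A_t⁻ F(t,y)⟩ + (p₁ − 1)|A_t⁻ G(t,x) − A_t⁻ G(t,y)|² ≤ (1/10)|x − y|². -/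
/-
The drift term splits into the dissipative cubic part `-4(t²+1)(x₁³ - y₁³)(x₁ - y₁)` and
`(x₂ - y₂)(x₃ - y₃)/5 ≤ (|x₂ - y₂|² + |x₃ - y₃|²)/10`. The noise term equals
`(p₁ - 1)c²(x₁² - y₁²)²/100 ≤ 3(x₁² - y₁²)²`, and the cubic part absorbs it because
`4(a³ - b³)(a - b) - 3(a² - b²)² = (a - b)⁴ ≥ 0`.
-/

open Matrix

/-- `A_t⁻ = diag(2(t²+1), 1/10, 0)`. -/
noncomputable def Am18 (t : ℝ) : Matrix (Fin 3) (Fin 3) ℝ :=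
  Matrix.diagonal ![2 * (t ^ 2 + 1), 1/10, 0]

/-- `P = diag(1, 1, 0)`. -/
def P18 : Matrix (Fin 3) (Fin 3) ℝ := Matrix.diagonal ![1, 1, 0]

/-- `F(t,x) = (−x₁³, x₃, t x₂ + x₃)ᵀ`. -/
def F18 (t : ℝ) (x : Fin 3 → ℝ) : Fin 3 → ℝ := ![-(x 0) ^ 3, x 2, t * x 1 + x 2]

/-- `G(t,x) = diag(sin t, c x₁², 0)`. -/
noncomputable def G18 (c : ℝ) (t : ℝ) (x : Fin 3 → ℝ) : Matrix (Fin 3) (Fin 3) ℝ :=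
  Matrix.diagonal ![Real.sin t, c * (x 0) ^ 2, 0]

lemma vnorm_sq {d : ℕ} (x : Fin d → ℝ) : vnorm x ^ 2 = ∑ i, x i ^ 2 :=
  Real.sq_sqrt (by positivity)

lemma mnorm_diagonal_sq {d : ℕ} (v : Fin d → ℝ) : mnorm (diagonal v) ^ 2 = ∑ i, v i ^ 2 := by
  rw [mnorm, diagonal_transpose, diagonal_mul_diagonal, trace_diagonal]
  simp only [← sq]
  exact Real.sq_sqrt (by positivity)

lemma three_mul_sq_sub_sq_le_four_mul_cube_sub_mul_sub (a b : ℝ) :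
    3 * (a ^ 2 - b ^ 2) ^ 2 ≤ 4 * ((a ^ 3 - b ^ 3) * (a - b)) := by
  have hfactor : 4 * ((a ^ 3 - b ^ 3) * (a - b)) - 3 * (a ^ 2 - b ^ 2) ^ 2
      = (a - b) ^ 4 := by ring
  have : 0 ≤ (a - b) ^ 4 := by positivity
  linarith

lemma two_mul_vdot_P18_Am18_F18 (t : ℝ) (x y : Fin 3 → ℝ) :
    2 * vdot (P18.mulVec x - P18.mulVec y)
        ((Am18 t).mulVec (F18 t x) - (Am18 t).mulVec (F18 t y)) =
      -4 * (t ^ 2 + 1) * ((x 0 ^ 3 - y 0 ^ 3) * (x 0 - y 0))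
        + (x 1 - y 1) * (x 2 - y 2) / 5 := by
  simp only [vdot, P18, Am18, F18, Pi.sub_apply, mulVec_diagonal, Fin.sum_univ_three,
    cons_val_zero, cons_val_one, cons_val]
  ring

lemma mnorm_Am18_mul_G18_sub_sq (c t : ℝ) (x y : Fin 3 → ℝ) :
    mnorm (Am18 t * G18 c t x - Am18 t * G18 c t y) ^ 2 =
      c ^ 2 / 100 * (x 0 ^ 2 - y 0 ^ 2) ^ 2 := by
  rw [Am18, G18, G18, diagonal_mul_diagonal, diagonal_mul_diagonal, diagonal_sub,
    mnorm_diagonal_sq]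
  simp only [Fin.sum_univ_three, cons_val_zero, cons_val_one, cons_val]
  ring

theorem stmt18_general (c p1 : ℝ) (hc : (p1 - 1) * c ^ 2 ≤ 300) :
    ∀ (t : ℝ) (x y : Fin 3 → ℝ),
      2 * vdot (P18.mulVec x - P18.mulVec y)
          ((Am18 t).mulVec (F18 t x) - (Am18 t).mulVec (F18 t y)) +
        (p1 - 1) * mnorm (Am18 t * G18 c t x - Am18 t * G18 c t y) ^ 2 ≤
        (1/10) * vnorm (x - y) ^ 2 := by
  intro t x y
  rw [two_mul_vdot_P18_Am18_F18, mnorm_Am18_mul_G18_sub_sq, vnorm_sq, Fin.sum_univ_three]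
  simp only [Pi.sub_apply]
  have hcube := three_mul_sq_sub_sq_le_four_mul_cube_sub_mul_sub (x 0) (y 0)
  have hdiffusion : (p1 - 1) * (c ^ 2 / 100 * (x 0 ^ 2 - y 0 ^ 2) ^ 2)
      ≤ 3 * (x 0 ^ 2 - y 0 ^ 2) ^ 2 := by
    nlinarith [mul_le_mul_of_nonneg_right hc (sq_nonneg (x 0 ^ 2 - y 0 ^ 2))]
  have hdrift : 4 * ((x 0 ^ 3 - y 0 ^ 3) * (x 0 - y 0))
      ≤ 4 * (t ^ 2 + 1) * ((x 0 ^ 3 - y 0 ^ 3) * (x 0 - y 0)) := by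
    nlinarith [sq_nonneg t, sq_nonneg (x 0 ^ 2 - y 0 ^ 2)]
  linarith [two_mul_le_add_sq (x 1 - y 1) (x 2 - y 2), sq_nonneg (x 0 - y 0)]

theorem stmt18 (c p1 : ℝ) (hp1 : 1 < p1) (hc : (p1 - 1) * c ^ 2 ≤ 300) :
    ∀ (t : ℝ) (x y : Fin 3 → ℝ),
      2 * vdot (P18.mulVec x - P18.mulVec y)
          ((Am18 t).mulVec (F18 t x) - (Am18 t).mulVec (F18 t y)) +
        (p1 - 1) * mnorm (Am18 t * G18 c t x - Am18 t * G18 c t y) ^ 2 ≤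
        (1/10) * vnorm (x - y) ^ 2 :=
  stmt18_general c p1 hc
end
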